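/- arXiv:2403.10626 — 3 statements merged into one kernel-verified Lean document; each statement's English description precedes it below -/
import Mathlib

section
/- Let A be a symmetric integer matrix such that A modulo 4 equals diag(r·[[2,1],[1,2]], s·[[0,1],[1,0]], t·[[0,2],[2,0]], p·[2], m·[0]) with p ≥ 1 and r ≥ 1. Then there is an integer matrix P with det(P) = ±1 such that P^T A P modulo 4 equals diag((r−1)·[[2,1],[1,2]], (s+1)·[[0,1],[1,0]], t·[[0,2],[2,0]], p·[2], m·[0]). -/
/-- Entry `(i,j)` of the block diagonal matrix
`diag(r·[[2,1],[1,2]], s·[[0,1],[1,0]], t·[[0,2],[2,0]], p·[2], m·[0])`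
(the `m` trailing zero rows/columns are implicit: the entry is `0` there). -/
def nfEntry (r s t p : ℕ) (i j : ℕ) : ℤ :=
  if i < 2*r ∧ j < 2*r then (if i = j then 2 else if i / 2 = j / 2 then 1 else 0)
  else if 2*r ≤ i ∧ i < 2*r+2*s ∧ 2*r ≤ j ∧ j < 2*r+2*s then
    (if i ≠ j ∧ i / 2 = j / 2 then 1 else 0)
  else if 2*r+2*s ≤ i ∧ i < 2*r+2*s+2*t ∧ 2*r+2*s ≤ j ∧ j < 2*r+2*s+2*t then
    (if i ≠ j ∧ i / 2 = j / 2 then 2 else 0)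
  else if 2*r+2*s+2*t ≤ i ∧ i < 2*r+2*s+2*t+p ∧ i = j then 2
  else 0

open Matrix

theorem my_transv_transpose {n : Type*} [DecidableEq n] (x y : n) (c : ℤ) :
    (Matrix.transvection x y c)ᵀ = Matrix.transvection y x c := by
  ext i j
  simp [Matrix.transvection, Matrix.single, Matrix.one_apply, and_comm, eq_comm]

theorem my_conj_apply {n : Type*} [DecidableEq n] [Fintype n]
    (B : Matrix n n ℤ) (x y : n) (c : ℤ) (i j : n) :
    ((Matrix.transvection x y c)ᵀ * B * Matrix.transvection x y c) i j
      = B i j + (if i = y then c * B x j else 0) + (if j = y then c * B i x else 0)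
        + (if i = y ∧ j = y then c * c * B x x else 0) := by
  rw [my_transv_transpose]
  by_cases hi : i = y <;> by_cases hj : j = y <;>
    simp [*, Matrix.mul_transvection_apply_same, Matrix.mul_transvection_apply_of_ne,
      Matrix.transvection_mul_apply_same, Matrix.transvection_mul_apply_of_ne] <;>
    ring

theorem my_nf_symm (r s t p i j : ℕ) : nfEntry r s t p i j = nfEntry r s t p j i := by
  unfold nfEntry; split_ifs <;> omega

theorem my_nf_row_a {r : ℕ} (hr : 1 ≤ r) (s t p j : ℕ) :
    nfEntry r s t p (2*r-2) j = if j = 2*r-2 then 2 else if j = 2*r-1 then 1 else 0 := by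
  unfold nfEntry; split_ifs <;> omega

theorem my_nf_row_b {r : ℕ} (hr : 1 ≤ r) (s t p j : ℕ) :
    nfEntry r s t p (2*r-1) j = if j = 2*r-2 then 1 else if j = 2*r-1 then 2 else 0 := by
  unfold nfEntry; split_ifs <;> omega

theorem my_nf_row_c {r p : ℕ} (hp : 1 ≤ p) (s t j : ℕ) :
    nfEntry r s t p (2*r+2*s+2*t) j = if j = 2*r+2*s+2*t then 2 else 0 := by
  unfold nfEntry; split_ifs <;> omega

theorem my_nf_col_a {r : ℕ} (hr : 1 ≤ r) (s t p i : ℕ) :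
    nfEntry r s t p i (2*r-2) = if i = 2*r-2 then 2 else if i = 2*r-1 then 1 else 0 := by
  rw [my_nf_symm, my_nf_row_a hr]

theorem my_nf_col_b {r : ℕ} (hr : 1 ≤ r) (s t p i : ℕ) :
    nfEntry r s t p i (2*r-1) = if i = 2*r-2 then 1 else if i = 2*r-1 then 2 else 0 := by
  rw [my_nf_symm, my_nf_row_b hr]

theorem my_nf_col_c {r p : ℕ} (hp : 1 ≤ p) (s t i : ℕ) :
    nfEntry r s t p i (2*r+2*s+2*t) = if i = 2*r+2*s+2*t then 2 else 0 := by
  rw [my_nf_symm, my_nf_row_c hp]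

set_option maxHeartbeats 4000000 in
theorem my_nf_diff {r : ℕ} (hr : 1 ≤ r) (s t p i j : ℕ) :
    nfEntry (r-1) (s+1) t p i j = nfEntry r s t p i j
      + (if i = 2*r-2 ∧ j = 2*r-2 then -2 else 0)
      + (if i = 2*r-1 ∧ j = 2*r-1 then -2 else 0) := by
  unfold nfEntry; split_ifs <;> omega

open Matrix in
set_option maxHeartbeats 4000000 in
/-- Lemma 2.5 (inductive step): if p ≥ 1 and r ≥ 1 then one block [[2,1],[1,2]] can be traded for one block [[0,1],[1,0]]. -/
theorem stmt_6 (n r s t p m : ℕ) (A : Matrix (Fin n) (Fin n) ℤ)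
    (hsym : A.IsSymm)
    (hn : n = 2*r + 2*s + 2*t + p + m)
    (hge : 1 ≤ p ∧ 1 ≤ r)
    (hA : ∀ i j : Fin n,
      ((A i j : ℤ) : ZMod 4) = ((nfEntry r s t p (i : ℕ) (j : ℕ) : ℤ) : ZMod 4)) :
    ∃ P : Matrix (Fin n) (Fin n) ℤ, (P.det = 1 ∨ P.det = -1) ∧
      ∀ i j : Fin n,
        (((Pᵀ * A * P) i j : ℤ) : ZMod 4) = ((nfEntry (r-1) (s+1) t p (i : ℕ) (j : ℕ) : ℤ) : ZMod 4) := by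
  obtain ⟨hp, hr⟩ := hge
  have h1 : 2*r-2 < n := by omega
  have h2 : 2*r-1 < n := by omega
  have h3 : 2*r+2*s+2*t < n := by omega
  set a : Fin n := ⟨2*r-2, h1⟩ with ha0
  set b : Fin n := ⟨2*r-1, h2⟩ with hb0
  set c : Fin n := ⟨2*r+2*s+2*t, h3⟩ with hc0
  have hab : a ≠ b := by simp [ha0, hb0, Fin.ext_iff]; omega
  have hbc : b ≠ c := by simp [hb0, hc0, Fin.ext_iff]; omega
  have hca : c ≠ a := by simp [hc0, ha0, Fin.ext_iff]; omega
  have hav : (a : ℕ) = 2*r-2 := rfl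
  have hbv : (b : ℕ) = 2*r-1 := rfl
  have hcv : (c : ℕ) = 2*r+2*s+2*t := rfl
  refine ⟨transvection c a (-1) * transvection b c 2 * transvection a b (-1), Or.inl ?_, ?_⟩
  · simp [Matrix.det_mul, Matrix.det_transvection_of_ne, hab, hbc, hca]
  · intro i j
    have hPform : (transvection c a (-1) * transvection b c 2 * transvection a b (-1))ᵀ * A *
        (transvection c a (-1) * transvection b c 2 * transvection a b (-1))
        = (transvection a b (-1))ᵀ * ((transvection b c 2)ᵀ *
            ((transvection c a (-1))ᵀ * A * transvection c a (-1)) * transvection b c 2) *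
          transvection a b (-1) := by
      simp only [Matrix.transpose_mul, Matrix.mul_assoc]
    rw [hPform, my_nf_diff hr]
    simp only [my_conj_apply]
    push_cast [apply_ite (fun z : ℤ => (z : ZMod 4))]
    simp only [hA, hav, hbv, hcv, Fin.ext_iff]
    have f12 : ¬(2*r-2 = 2*r-1) := by omega
    have f13 : ¬(2*r-2 = 2*r+2*s+2*t) := by omega
    have f23 : ¬(2*r-1 = 2*r+2*s+2*t) := by omega
    have f21 : ¬(2*r-1 = 2*r-2) := by omega
    have f31 : ¬(2*r+2*s+2*t = 2*r-2) := by omega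
    have f32 : ¬(2*r+2*s+2*t = 2*r-1) := by omega
    by_cases hi1 : (i:ℕ) = 2*r-2 <;> by_cases hi2 : (i:ℕ) = 2*r-1 <;>
      by_cases hi3 : (i:ℕ) = 2*r+2*s+2*t <;>
      by_cases hj1 : (j:ℕ) = 2*r-2 <;> by_cases hj2 : (j:ℕ) = 2*r-1 <;>
      by_cases hj3 : (j:ℕ) = 2*r+2*s+2*t <;>
      first
        | (exfalso; omega)
        | (simp only [hi1, hi2, hi3, hj1, hj2, hj3, my_nf_row_a hr, my_nf_row_b hr,
            my_nf_row_c hp, my_nf_col_a hr, my_nf_col_b hr, my_nf_col_c hp];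
           simp [f12, f13, f23, f21, f31, f32, apply_ite (fun z : ℤ => (z : ZMod 4))];
           try decide)
end

section
/- Let A be a symmetric n×n integer matrix with even diagonal entries such that A modulo 4 equals diag(r·[[2,1],[1,2]], s·[[0,1],[1,0]], t·[[0,2],[2,0]], p·[2], m·[0]), and let q be the associated quadratic form on 𝔽₂ⁿ with radical V̄₀ (the kernel of A mod 2). Then q(V̄₀) = {0} if and only if p = 0, and q(V̄₀) = 𝔽₂ if and only if p ≥ 1. -/
open Matrix in
/-- The quadratic form over `𝔽₂` associated with a symmetric integer matrix `A`
with even diagonal entries: `q(v) = (ṽᵀ A ṽ)/2 (mod 2)`, computed on the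
canonical integer lift `ṽ` of `v` (it is independent of the chosen lift). -/
def qf {n : ℕ} (A : Matrix (Fin n) (Fin n) ℤ) (v : Fin n → ZMod 2) : ZMod 2 :=
  ((((fun i => ((v i).val : ℤ)) ⬝ᵥ A.mulVec (fun i => ((v i).val : ℤ))) / 2 : ℤ) : ZMod 2)

open Matrix

theorem Finset.sum_sum_eq_zero_of_add_swap_eq_zero {ι M : Type*} [Fintype ι] [AddCommMonoid M]
    (f : ι → ι → M) (hdiag : ∀ i, f i i = 0) (hswap : ∀ i j, f i j + f j i = 0) :
    ∑ i, ∑ j, f i j = 0 := by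
  rw [← Finset.sum_product']
  refine Finset.sum_involution (fun x _ => x.swap) (fun x _ => hswap x.1 x.2) ?_
    (fun _ _ => Finset.mem_univ _) (fun x _ => x.swap_swap)
  rintro ⟨i, j⟩ - hne heq
  obtain rfl : i = j := (Prod.ext_iff.mp heq).2
  exact hne (hdiag i)

theorem Matrix.dotProduct_mulVec_self_eq_zero {ι R : Type*} [Fintype ι] [CommRing R]
    {B : Matrix ι ι R} (hB : B.IsSymm) {u : ι → R} (hdiag : ∀ i, u i * B i i * u i = 0)
    (hoff : ∀ i j, 2 * (u i * B i j * u j) = 0) : u ⬝ᵥ B *ᵥ u = 0 := by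
  simp only [dotProduct, mulVec, Finset.mul_sum, ← mul_assoc]
  refine Finset.sum_sum_eq_zero_of_add_swap_eq_zero _ hdiag fun i j => ?_
  rw [hB.apply i j]
  linear_combination hoff i j

theorem Matrix.intCast_dotProduct_mulVec {ι R : Type*} [Fintype ι] [CommRing R]
    (A : Matrix ι ι ℤ) (w : ι → ℤ) :
    ((w ⬝ᵥ A *ᵥ w : ℤ) : R) = (fun i => (w i : R)) ⬝ᵥ A.map Int.cast *ᵥ fun i => (w i : R) := by
  simp [dotProduct, mulVec]

theorem Matrix.map_intCast_two_eq_of_map_intCast_four {ι : Type*} {A B : Matrix ι ι ℤ}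
    (h : A.map (Int.cast : ℤ → ZMod 4) = B.map Int.cast) :
    A.map (Int.cast : ℤ → ZMod 2) = B.map Int.cast := by
  ext i j
  simpa using congrArg (ZMod.castHom (show 2 ∣ 4 by norm_num) (ZMod 2)) (congrFun₂ h i j)

def liftMod4 {ι : Type*} (v : ι → ZMod 2) : ι → ZMod 4 := fun i => ((v i).val : ZMod 4)

/-- On the radical, `ṽᵀAṽ` is even, and `q(v)` records whether it is `0` or `2` modulo `4`. -/
theorem qf_eq_zero_iff {n : ℕ} {A : Matrix (Fin n) (Fin n) ℤ} {v : Fin n → ZMod 2}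
    (hv : A.map (Int.cast : ℤ → ZMod 2) *ᵥ v = 0) :
    qf A v = 0 ↔ liftMod4 v ⬝ᵥ A.map (Int.cast : ℤ → ZMod 4) *ᵥ liftMod4 v = 0 := by
  set w : Fin n → ℤ := fun i => ((v i).val : ℤ)
  have hmod2 : ((w ⬝ᵥ A *ᵥ w : ℤ) : ZMod 2) = 0 := by
    have hw : (fun i => (w i : ZMod 2)) = v := funext fun i => by simp [w]
    rw [intCast_dotProduct_mulVec, hw, hv, dotProduct_zero]
  have hmod4 : ((w ⬝ᵥ A *ᵥ w : ℤ) : ZMod 4) = liftMod4 v ⬝ᵥ A.map Int.cast *ᵥ liftMod4 v := by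
    rw [intCast_dotProduct_mulVec]; rfl
  rw [ZMod.intCast_zmod_eq_zero_iff_dvd] at hmod2
  change (((w ⬝ᵥ A *ᵥ w) / 2 : ℤ) : ZMod 2) = 0 ↔ _
  rw [← hmod4, ZMod.intCast_zmod_eq_zero_iff_dvd, ZMod.intCast_zmod_eq_zero_iff_dvd]
  omega

theorem liftMod4_single {ι : Type*} [DecidableEq ι] (k : ι) (x : ZMod 2) :
    liftMod4 (Pi.single k x) = Pi.single k (x.val : ZMod 4) := by
  funext i
  by_cases h : i = k
  · subst h; simp [liftMod4]
  · simp [liftMod4, h]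

def nfMatrix (r s t p n : ℕ) : Matrix (Fin n) (Fin n) ℤ :=
  Matrix.of fun i j => nfEntry r s t p i j

section NormalForm

variable (r s t p : ℕ)

theorem nfEntry_comm (i j : ℕ) : nfEntry r s t p i j = nfEntry r s t p j i := by
  unfold nfEntry; split_ifs <;> omega

/-- In the first `2r + 2s` coordinates the index `2 ⌊i/2⌋ + 1 - i % 2` is the partner of `i` in its
`2 × 2` block, and modulo `2` its row is the `i`-th unit vector. -/
theorem nfEntry_partner_emod_two {i : ℕ} (hi : i < 2*r+2*s) (k : ℕ) :
    nfEntry r s t p (2*(i/2) + 1 - i%2) k % 2 = if k = i then 1 else 0 := by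
  unfold nfEntry; split_ifs <;> omega

theorem four_dvd_two_mul_nfEntry {i j : ℕ} (hi : 2*r+2*s ≤ i) (hj : 2*r+2*s ≤ j) :
    4 ∣ 2 * nfEntry r s t p i j := by
  unfold nfEntry; split_ifs <;> omega

theorem nfEntry_zero_self {i : ℕ} (hi : 2*r+2*s ≤ i) : nfEntry r s t 0 i i = 0 := by
  unfold nfEntry; split_ifs <;> omega

theorem nfEntry_self_of_pos (hp : 0 < p) :
    nfEntry r s t p (2*r+2*s+2*t) (2*r+2*s+2*t) = 2 := by
  unfold nfEntry; split_ifs <;> omega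

theorem two_dvd_nfEntry {i j : ℕ} (hj : 2*r+2*s+2*t ≤ j) : 2 ∣ nfEntry r s t p i j := by
  unfold nfEntry; split_ifs <;> omega

variable {n : ℕ}

theorem nfMatrix_isSymm : (nfMatrix r s t p n).IsSymm :=
  Matrix.IsSymm.ext fun i j => nfEntry_comm r s t p j i

theorem eq_zero_of_nfMatrix_mulVec_eq_zero (hn : 2*r+2*s ≤ n) {v : Fin n → ZMod 2}
    (hv : (nfMatrix r s t p n).map (Int.cast : ℤ → ZMod 2) *ᵥ v = 0)
    (i : Fin n) (hi : (i : ℕ) < 2*r+2*s) : v i = 0 := by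
  let j : Fin n := ⟨2*(i/2) + 1 - i%2, by omega⟩
  have hrow : (fun k => ((nfMatrix r s t p n j k : ℤ) : ZMod 2)) = Pi.single i 1 := by
    funext k
    have hj : (j : ℕ) = 2*(i/2) + 1 - i%2 := rfl
    rw [nfMatrix, of_apply, ← ZMod.intCast_mod, Nat.cast_ofNat, hj,
      nfEntry_partner_emod_two r s t p hi, Pi.single_apply]
    split_ifs <;> simp_all [Fin.ext_iff]
  simpa [mulVec, hrow] using congrFun hv j

theorem liftMod4_dotProduct_nfMatrix_mulVec_eq_zero {v : Fin n → ZMod 2}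
    (hv : ∀ i : Fin n, (i : ℕ) < 2*r+2*s → v i = 0) :
    liftMod4 v ⬝ᵥ (nfMatrix r s t 0 n).map (Int.cast : ℤ → ZMod 4) *ᵥ liftMod4 v = 0 := by
  have hu : ∀ i : Fin n, (i : ℕ) < 2*r+2*s → liftMod4 v i = 0 := fun i hi => by
    simp [liftMod4, hv i hi]
  refine dotProduct_mulVec_self_eq_zero ((nfMatrix_isSymm r s t 0).map _) (fun i => ?_) fun i j => ?_
  · rcases lt_or_ge (i : ℕ) (2*r+2*s) with hi | hi
    · simp [hu i hi]
    · simp [nfMatrix, nfEntry_zero_self r s t hi]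
  · rcases lt_or_ge (i : ℕ) (2*r+2*s) with hi | hi
    · simp [hu i hi]
    rcases lt_or_ge (j : ℕ) (2*r+2*s) with hj | hj
    · simp [hu j hj]
    have h4 : ((2 * nfEntry r s t 0 i j : ℤ) : ZMod 4) = 0 :=
      (ZMod.intCast_zmod_eq_zero_iff_dvd _ 4).mpr (four_dvd_two_mul_nfEntry r s t 0 hi hj)
    push_cast at h4
    simp only [map_apply, nfMatrix, of_apply]
    linear_combination liftMod4 v i * liftMod4 v j * h4

theorem nfMatrix_mulVec_single_eq_zero (k : Fin n) (hk : (k : ℕ) = 2*r+2*s+2*t) :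
    (nfMatrix r s t p n).map (Int.cast : ℤ → ZMod 2) *ᵥ Pi.single k 1 = 0 := by
  funext i
  rw [mulVec_single_one, col_apply, map_apply, Pi.zero_apply, ZMod.intCast_zmod_eq_zero_iff_dvd]
  exact two_dvd_nfEntry r s t p hk.ge

theorem single_dotProduct_nfMatrix_mulVec_single (hp : 0 < p) (k : Fin n)
    (hk : (k : ℕ) = 2*r+2*s+2*t) :
    Pi.single k 1 ⬝ᵥ (nfMatrix r s t p n).map (Int.cast : ℤ → ZMod 4) *ᵥ Pi.single k 1 = 2 := by
  simp [nfMatrix, hk, nfEntry_self_of_pos r s t p hp]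

end NormalForm

open Matrix in
theorem stmt_10_general (n r s t p m : ℕ) (A : Matrix (Fin n) (Fin n) ℤ)
    (hn : n = 2*r + 2*s + 2*t + p + m)
    (hA : ∀ i j : Fin n,
      ((A i j : ℤ) : ZMod 4) = ((nfEntry r s t p (i : ℕ) (j : ℕ) : ℤ) : ZMod 4)) :
    ((∀ v : Fin n → ZMod 2, (A.map (Int.cast : ℤ → ZMod 2)).mulVec v = 0 → qf A v = 0)
        ↔ p = 0) ∧
    ((∃ v : Fin n → ZMod 2, (A.map (Int.cast : ℤ → ZMod 2)).mulVec v = 0 ∧ qf A v = 1)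
        ↔ 1 ≤ p) := by
  have hA4 : A.map (Int.cast : ℤ → ZMod 4) = (nfMatrix r s t p n).map Int.cast := by
    ext i j; exact hA i j
  have hA2 := map_intCast_two_eq_of_map_intCast_four hA4
  have hvanish : (∀ v, A.map (Int.cast : ℤ → ZMod 2) *ᵥ v = 0 → qf A v = 0) ↔ p = 0 := by
    refine ⟨fun h => by_contra fun hp => ?_, fun hp v hv => ?_⟩
    · let k : Fin n := ⟨2*r+2*s+2*t, by omega⟩
      have hrad := nfMatrix_mulVec_single_eq_zero r s t p k rfl
      have hq := h _ (hA2 ▸ hrad)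
      rw [qf_eq_zero_iff (hA2 ▸ hrad), hA4, liftMod4_single, ZMod.val_one, Nat.cast_one,
        single_dotProduct_nfMatrix_mulVec_single r s t p (by omega) k rfl] at hq
      exact absurd hq (by decide)
    · subst hp
      rw [qf_eq_zero_iff hv, hA4]
      exact liftMod4_dotProduct_nfMatrix_mulVec_eq_zero r s t
        (eq_zero_of_nfMatrix_mulVec_eq_zero r s t 0 (by omega) (hA2 ▸ hv))
  have hone : ∀ x : ZMod 2, x = 1 ↔ x ≠ 0 := by decide
  refine ⟨hvanish, ?_⟩
  rw [show 1 ≤ p ↔ ¬p = 0 by omega, ← hvanish]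
  simp only [hone, not_forall, exists_prop]

open Matrix in
/-- Lemma 2.7(vi): q vanishes on the radical V̄₀ = ker(A mod 2) iff p = 0,
and q takes the value 1 on V̄₀ (i.e. q(V̄₀) = 𝔽₂) iff p ≥ 1. -/
theorem stmt_10 (n r s t p m : ℕ) (A : Matrix (Fin n) (Fin n) ℤ)
    (hsym : A.IsSymm) (hdiag : ∀ i, Even (A i i))
    (hn : n = 2*r + 2*s + 2*t + p + m)
    (hA : ∀ i j : Fin n,
      ((A i j : ℤ) : ZMod 4) = ((nfEntry r s t p (i : ℕ) (j : ℕ) : ℤ) : ZMod 4)) :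
    ((∀ v : Fin n → ZMod 2, (A.map (Int.cast : ℤ → ZMod 2)).mulVec v = 0 → qf A v = 0)
        ↔ p = 0) ∧
    ((∃ v : Fin n → ZMod 2, (A.map (Int.cast : ℤ → ZMod 2)).mulVec v = 0 ∧ qf A v = 1)
        ↔ 1 ≤ p) :=
  stmt_10_general n r s t p m A hn hA
end

section
/- Let A be a symmetric n×n integer matrix with even diagonal entries where n is odd. Then det(A) ≡ 0 or 2 mod 4. Moreover, det(A) ≡ 2 mod 4 if and only if rank of Ā = A mod 2 equals n − 1 and the associated quadratic form q is nonzero on the 1-dimensional kernel of Ā (equivalently dim V̄₀ = 1 and dim V̄₀₀ = 0). -/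
open Matrix

theorem ZMod.ne_zero_iff_eq_one_mod_two {x : ZMod 2} : x ≠ 0 ↔ x = 1 :=
  ⟨Fin.eq_one_of_ne_zero x, fun h => h ▸ one_ne_zero⟩

theorem intCast_two_mul_zmod_four_eq_zero_or_eq_two (t : ℤ) :
    ((2 * t : ℤ) : ZMod 4) = 0 ∨ ((2 * t : ℤ) : ZMod 4) = 2 := by
  push_cast
  generalize (t : ZMod 4) = x
  revert x
  decide

theorem intCast_two_mul_zmod_four_eq_two_iff (t : ℤ) :
    ((2 * t : ℤ) : ZMod 4) = 2 ↔ (t : ZMod 2) = 1 := by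
  rw [← map_intCast (ZMod.castHom (by norm_num : 2 ∣ 4) (ZMod 2)) t]
  push_cast
  generalize (t : ZMod 4) = x
  revert x
  decide

theorem ZMod.eq_of_ne_zero_of_finrank_eq_one_mod_two {V : Type*} [AddCommGroup V]
    [Module (ZMod 2) V] (h : Module.finrank (ZMod 2) V = 1) {x y : V} (hx : x ≠ 0) (hy : y ≠ 0) :
    x = y := by
  obtain ⟨g, -, hg⟩ := finrank_eq_one_iff'.mp h
  obtain ⟨a, rfl⟩ := hg x
  obtain ⟨b, rfl⟩ := hg y
  rw [ne_zero_iff_eq_one_mod_two.mp (left_ne_zero_of_smul hx),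
    ne_zero_iff_eq_one_mod_two.mp (left_ne_zero_of_smul hy)]

namespace Matrix

section Determinant

variable {R : Type*} [CommRing R]

theorem det_eq_zero_of_transpose_eq_neg [NoZeroDivisors R] [CharZero R] {n : Type*} [Fintype n]
    [DecidableEq n] (hn : Odd (Fintype.card n)) {M : Matrix n n R} (h : Mᵀ = -M) : M.det = 0 := by
  rw [← CharZero.eq_neg_self_iff]
  calc M.det = Mᵀ.det := M.det_transpose.symm
    _ = -M.det := by rw [h, det_neg, hn.neg_one_pow, neg_one_mul]

/-- The matrix on the right is the Gram matrix of `A` in the basis where `e j` is replaced by `x`,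
with its `j`-th row divided by `c`. -/
theorem det_eq_mul_det_of_mulVec_eq_smul {n : Type*} [Fintype n] [DecidableEq n]
    {A : Matrix n n R} (hA : A.IsSymm) {j : n} {x w : n → R} (hx : x j = 1) (c : R)
    (hw : A *ᵥ x = c • w) :
    A.det = c * ((A.updateCol j (c • w)).updateRow j (Function.update w j (x ⬝ᵥ w))).det := by
  set B := A.updateCol j (c • w)
  have hcol : B.det = A.det := by
    have hAx : (fun i => ∑ k, x k • A i k) = c • w := by
      rw [← hw]; ext; simp [mulVec, dotProduct, mul_comm]
    have := det_updateCol_sum A j x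
    rwa [hAx, hx, one_smul] at this
  have hrow : B.det = (B.updateRow j (x ᵥ* B)).det := by
    have hxB : ∑ k, x k • B k = x ᵥ* B := by ext; simp [vecMul, dotProduct]
    have := det_updateRow_sum B j x
    rw [hxB, hx, one_smul] at this
    exact this.symm
  have hB : x ᵥ* B = c • Function.update w j (x ⬝ᵥ w) := by
    rw [vecMul_updateCol, ← mulVec_transpose, hA.eq, hw, dotProduct_smul, Function.update_smul]
  rw [← hcol, hrow, hB, det_updateRow_smul]

theorem det_eq_mul_det_submatrix_of_col_eq_zero {k : ℕ} (M : Matrix (Fin (k + 1)) (Fin (k + 1)) R)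
    (j : Fin (k + 1)) (h : ∀ i ≠ j, M i j = 0) :
    M.det = M j j * (M.submatrix j.succAbove j.succAbove).det := by
  rw [det_succ_column M j, Finset.sum_eq_single j (fun i _ hi => by rw [h i hi, mul_zero, zero_mul])
    (fun hj => absurd (Finset.mem_univ j) hj), ← two_mul, pow_mul, neg_one_sq, one_pow, one_mul]

end Determinant

theorem det_map_intCast_zmod_two_eq_zero {ι : Type*} [Fintype ι] [LinearOrder ι]
    (hι : Odd (Fintype.card ι)) {A : Matrix ι ι ℤ} (hA : A.IsSymm) (hdiag : ∀ i, Even (A i i)) :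
    (A.map (Int.cast : ℤ → ZMod 2)).det = 0 := by
  let N : Matrix ι ι ℤ := of fun i l => if i < l then A i l else 0
  have hmod : A.map (Int.cast : ℤ → ZMod 2) = (N - Nᵀ).map Int.cast := by
    ext i l
    rcases lt_trichotomy i l with h | rfl | h
    · simp [N, h, h.not_gt]
    · simpa [N] using (hdiag i).intCast_zmod_two
    · simp [N, h, h.not_gt, ZMod.neg_eq_self_mod_two, hA.apply i l]
  rw [hmod, ← Int.cast_det, det_eq_zero_of_transpose_eq_neg hι (by simp [N]), Int.cast_zero]

section Rank

variable {R : Type*} [CommRing R] {k : ℕ} {l o : Type*}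

theorem mul_eq_submatrix_mul_submatrix_of_row_eq_zero (M : Matrix l (Fin (k + 1)) R)
    (N : Matrix (Fin (k + 1)) o R) {j : Fin (k + 1)} (hN : ∀ c, N j c = 0) :
    M * N = M.submatrix id j.succAbove * N.submatrix j.succAbove id := by
  ext a c
  simp [mul_apply, Fin.sum_univ_succAbove _ j, hN]

variable {K : Type*} [Field K]

theorem rank_submatrix_succAbove_of_mulVec_eq_zero (M : Matrix l (Fin (k + 1)) K)
    {x : Fin (k + 1) → K} {j : Fin (k + 1)} (hx : M *ᵥ x = 0) (hxj : x j = 1) :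
    (M.submatrix id j.succAbove).rank = M.rank := by
  refine le_antisymm (rank_submatrix_le _ _ _) ?_
  let N : Matrix (Fin (k + 1)) (Fin (k + 1)) K := 1 - vecMulVec x (Pi.single j 1)
  have hMN : M * N = M := by simp [N, Matrix.mul_sub, mul_vecMulVec, hx]
  have hN : ∀ c, N j c = 0 := fun c => by
    simp [N, vecMulVec_apply, hxj, one_apply, Pi.single_apply, eq_comm]
  calc M.rank = (M.submatrix id j.succAbove * N.submatrix j.succAbove id).rank := by
        rw [← mul_eq_submatrix_mul_submatrix_of_row_eq_zero M N hN, hMN]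
    _ ≤ _ := rank_mul_le_left _ _

theorem rank_submatrix_succAbove_succAbove_of_mulVec_eq_zero
    {M : Matrix (Fin (k + 1)) (Fin (k + 1)) K} (hM : M.IsSymm)
    {x : Fin (k + 1) → K} {j : Fin (k + 1)} (hx : M *ᵥ x = 0) (hxj : x j = 1) :
    (M.submatrix j.succAbove j.succAbove).rank = M.rank := by
  have hx' : M.submatrix j.succAbove id *ᵥ x = 0 := funext fun a => congrFun hx (j.succAbove a)
  calc (M.submatrix j.succAbove j.succAbove).rank
      = ((M.submatrix j.succAbove id).submatrix id j.succAbove).rank := rfl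
    _ = (M.submatrix j.succAbove id)ᵀ.rank := by
      rw [rank_submatrix_succAbove_of_mulVec_eq_zero _ hx' hxj, rank_transpose]
    _ = M.rank := by
      rw [transpose_submatrix, hM.eq, rank_submatrix_succAbove_of_mulVec_eq_zero M hx hxj]

theorem rank_eq_card_iff_det_ne_zero {n : Type*} [Fintype n] [DecidableEq n] (M : Matrix n n K) :
    M.rank = Fintype.card n ↔ M.det ≠ 0 := by
  refine ⟨fun h => ?_, rank_of_det_ne_zero⟩
  have hsurj : Function.Surjective M.mulVec := by
    rw [← coe_mulVecLin, ← LinearMap.range_eq_top]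
    exact Submodule.eq_top_of_finrank_eq (by rw [← rank, h, Module.finrank_fintype_fun_eq_card])
  exact ((isUnit_iff_isUnit_det M).mp (mulVec_surjective_iff_isUnit.mp hsurj)).ne_zero

theorem eq_of_mulVec_eq_zero_of_rank_add_one_eq {n : Type*} [Fintype n] [DecidableEq n]
    {M : Matrix n n (ZMod 2)} (hM : M.rank + 1 = Fintype.card n) {x y : n → ZMod 2}
    (hx : M *ᵥ x = 0) (hy : M *ᵥ y = 0) (hx0 : x ≠ 0) (hy0 : y ≠ 0) : x = y := by
  have hker : Module.finrank (ZMod 2) (LinearMap.ker M.mulVecLin) = 1 := by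
    have := LinearMap.finrank_range_add_finrank_ker M.mulVecLin
    rw [← rank, Module.finrank_fintype_fun_eq_card] at this
    omega
  exact congrArg Subtype.val <| ZMod.eq_of_ne_zero_of_finrank_eq_one_mod_two hker
    (x := ⟨x, hx⟩) (y := ⟨y, hy⟩) (fun h => hx0 (congrArg Subtype.val h))
    (fun h => hy0 (congrArg Subtype.val h))

end Rank

end Matrix

section Lift

variable {n : ℕ} {A : Matrix (Fin n) (Fin n) ℤ} {v : Fin n → ZMod 2}

theorem intCast_comp_val_lift (v : Fin n → ZMod 2) :
    (Int.cast : ℤ → ZMod 2) ∘ (fun i => ((v i).val : ℤ)) = v := by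
  ext i; simp

theorem exists_mulVec_lift_eq_two_smul (hv : A.map (Int.cast : ℤ → ZMod 2) *ᵥ v = 0) :
    ∃ w, A *ᵥ (fun i => ((v i).val : ℤ)) = (2 : ℤ) • w := by
  have heven : ∀ i, Even ((A *ᵥ fun i => ((v i).val : ℤ)) i) := fun i => by
    have := RingHom.map_mulVec (Int.castRingHom (ZMod 2)) A (fun i => ((v i).val : ℤ)) i
    simp only [Int.coe_castRingHom] at this
    rw [← ZMod.intCast_eq_zero_iff_even, this, intCast_comp_val_lift, hv, Pi.zero_apply]
  exact ⟨_, funext fun i => (Int.mul_ediv_cancel' (heven i).two_dvd).symm⟩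

theorem qf_eq_of_mulVec_lift_eq_two_smul {w : Fin n → ℤ}
    (hw : A *ᵥ (fun i => ((v i).val : ℤ)) = (2 : ℤ) • w) :
    qf A v = (((fun i => ((v i).val : ℤ)) ⬝ᵥ w : ℤ) : ZMod 2) := by
  rw [qf, hw, dotProduct_smul, smul_eq_mul, Int.mul_ediv_cancel_left _ two_ne_zero]

end Lift

theorem exists_det_eq_two_mul_of_mulVec_eq_zero {m : ℕ} {A : Matrix (Fin (m + 1)) (Fin (m + 1)) ℤ}
    (hA : A.IsSymm) {v : Fin (m + 1) → ZMod 2} (hv : A.map (Int.cast : ℤ → ZMod 2) *ᵥ v = 0)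
    {j : Fin (m + 1)} (hvj : v j = 1) :
    ∃ t : ℤ, A.det = 2 * t ∧ (t : ZMod 2) =
      qf A v * ((A.map (Int.cast : ℤ → ZMod 2)).submatrix j.succAbove j.succAbove).det := by
  set x : Fin (m + 1) → ℤ := fun i => ((v i).val : ℤ)
  obtain ⟨w, hw⟩ := exists_mulVec_lift_eq_two_smul hv
  have hxj : x j = 1 := by simp only [x, hvj]; rfl
  set P := (A.updateCol j ((2 : ℤ) • w)).updateRow j (Function.update w j (x ⬝ᵥ w))
  refine ⟨P.det, det_eq_mul_det_of_mulVec_eq_smul hA hxj 2 hw, ?_⟩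
  have hPjj : P.map (Int.cast : ℤ → ZMod 2) j j = ((x ⬝ᵥ w : ℤ) : ZMod 2) := by simp [P]
  have hminor : (P.map (Int.cast : ℤ → ZMod 2)).submatrix j.succAbove j.succAbove =
      (A.map Int.cast).submatrix j.succAbove j.succAbove := by
    ext a b; simp [P, Fin.succAbove_ne]
  have hcol : ∀ i ≠ j, P.map (Int.cast : ℤ → ZMod 2) i j = 0 := by
    intro i hi
    simp [P, hi, show (2 : ZMod 2) = 0 from rfl]
  rw [Int.cast_det, det_eq_mul_det_submatrix_of_col_eq_zero _ j hcol, hPjj, hminor,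
    qf_eq_of_mulVec_lift_eq_two_smul hw]

open Matrix in
/-- Corollary 1.3 (odd n): det(A) ≡ 0 or 2 (mod 4), and det(A) ≡ 2 (mod 4)
iff A mod 2 has rank n-1 and the associated quadratic form q is nonzero on
the kernel of A mod 2 (i.e. dim V̄₀ = 1 and dim V̄₀₀ = 0). -/
theorem stmt_16 (n : ℕ) (A : Matrix (Fin n) (Fin n) ℤ)
    (hsym : A.IsSymm) (hdiag : ∀ i, Even (A i i)) (hodd : Odd n) :
    (((A.det : ℤ) : ZMod 4) = 0 ∨ ((A.det : ℤ) : ZMod 4) = 2) ∧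
    (((A.det : ℤ) : ZMod 4) = 2 ↔
      ((A.map (Int.cast : ℤ → ZMod 2)).rank = n - 1 ∧
        ∀ v : Fin n → ZMod 2,
          (A.map (Int.cast : ℤ → ZMod 2)).mulVec v = 0 → v ≠ 0 → qf A v = 1)) := by
  obtain ⟨m, rfl⟩ : ∃ m, n = m + 1 := ⟨n - 1, by have := hodd.pos; omega⟩
  obtain ⟨v, hv0, hv⟩ := exists_mulVec_eq_zero_iff.mpr
    (det_map_intCast_zmod_two_eq_zero (by simpa using hodd) hsym hdiag)
  obtain ⟨j, hvj⟩ := Function.ne_iff.mp hv0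
  replace hvj := ZMod.ne_zero_iff_eq_one_mod_two.mp hvj
  obtain ⟨t, hdet, ht⟩ := exists_det_eq_two_mul_of_mulVec_eq_zero hsym hv hvj
  have hrank := rank_submatrix_succAbove_succAbove_of_mulVec_eq_zero (hsym.map _) hv hvj
  refine ⟨hdet ▸ intCast_two_mul_zmod_four_eq_zero_or_eq_two t, ?_⟩
  rw [hdet, intCast_two_mul_zmod_four_eq_two_iff, ht, mul_eq_one,
    ← ZMod.ne_zero_iff_eq_one_mod_two (x := det _), ← rank_eq_card_iff_det_ne_zero, hrank,
    Fintype.card_fin, Nat.add_sub_cancel]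
  constructor
  · rintro ⟨hq, hr⟩
    exact ⟨hr, fun y hy hy0 =>
      eq_of_mulVec_eq_zero_of_rank_add_one_eq (by simp [hr]) hy hv hy0 hv0 ▸ hq⟩
  · rintro ⟨hr, hq⟩
    exact ⟨hq v hv hv0, hr⟩
end
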